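/- Let μ(A) = γ(m(A)) with γ(x) = 1 − e^{−x} and m the Lebesgue measure on [0,1], and let f₀ ≡ 1. Then the iterates of the Volterra–Choquet operator V(f)(x) = (C)∫_{[0,x]} f dμ satisfy V^n(f₀)(x) = 1 − e^{−x} ∑_{k=0}^{n−1} x^k / k! for all n ≥ 1 and x ∈ [0,1]. -/

import Mathlib

/-!
If `f ≥ 0` is continuous and nondecreasing on `[0, x]`, every upper level set `{f ≥ β} ∩ [0, x]`
is empty or an interval `[s, x]`, whose distorted length `γ(x - s)` is also its mass under the
measure `ν = γ'(x - t) dt` on `[0, x]`. The layer-cake formula then turns the Choquet integral into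
`∫ f dν = ∫_0^x γ'(x - t) f(t) dt`. For `γ(t) = 1 - e^{-t}` this integral maps the Poisson tail
`P_n(t) = 1 - e^{-t} ∑_{k<n} t^k/k!`, which is nonnegative and nondecreasing on `[0, ∞)`, to
`P_{n+1}`, and `P_0 = 1`.
-/

open MeasureTheory Set Filter Topology

/-- The Choquet integral of `f` over `A` with respect to the set function `μ`:
`∫_0^∞ μ({f ≥ β} ∩ A) dβ + ∫_{-∞}^0 (μ({f ≥ β} ∩ A) - μ A) dβ`. -/
noncomputable def choquet {α : Type*} (μ : Set α → ℝ) (A : Set α) (f : α → ℝ) : ℝ :=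
  (∫ β in Ioi (0:ℝ), μ ({ω | β ≤ f ω} ∩ A)) +
  ∫ β in Iio (0:ℝ), (μ ({ω | β ≤ f ω} ∩ A) - μ A)

/-- The Volterra–Choquet operator with respect to the distorted Lebesgue measure
`μ(A) = 1 − e^{−m(A)}`. -/
noncomputable def volterraChoquet (f : ℝ → ℝ) : ℝ → ℝ :=
  fun x => choquet (fun A => 1 - Real.exp (-(volume A).toReal)) (Icc 0 x) f

theorem choquet_congr {α : Type*} (μ : Set α → ℝ) {A : Set α} {f g : α → ℝ}
    (h : EqOn f g A) : choquet μ A f = choquet μ A g := by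
  have hlevel : ∀ β : ℝ, {ω | β ≤ f ω} ∩ A = {ω | β ≤ g ω} ∩ A := fun β ↦ by
    ext a
    simp +contextual [h _]
  simp only [choquet, hlevel]

theorem choquet_of_nonneg {α : Type*} (μ : Set α → ℝ) {A : Set α} {f : α → ℝ}
    (hf : ∀ a ∈ A, 0 ≤ f a) :
    choquet μ A f = ∫ β in Ioi (0:ℝ), μ ({ω | β ≤ f ω} ∩ A) := by
  have hneg : ∀ β ∈ Iio (0:ℝ), μ ({ω | β ≤ f ω} ∩ A) - μ A = 0 := fun β hβ ↦ by
    have hA : {ω | β ≤ f ω} ∩ A = A := inter_eq_right.mpr fun a ha ↦ hβ.le.trans (hf a ha)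
    rw [hA, sub_self]
  rw [choquet, setIntegral_congr_fun measurableSet_Iio hneg, integral_zero, add_zero]

theorem MonotoneOn.setOf_le_inter_Icc_eq_Icc {f : ℝ → ℝ} {a b β : ℝ} (hab : a ≤ b)
    (hfc : ContinuousOn f (Icc a b)) (hfm : MonotoneOn f (Icc a b)) (hβ : β ≤ f b) :
    ∃ s ∈ Icc a b, {t | β ≤ f t} ∩ Icc a b = Icc s b := by
  set S := {t | β ≤ f t} ∩ Icc a b
  have hbS : b ∈ S := ⟨hβ, hab, le_rfl⟩
  have hbdd : BddBelow S := ⟨a, fun t ht ↦ ht.2.1⟩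
  have hclosed : IsClosed S := by
    rw [show S = Icc a b ∩ f ⁻¹' Ici β from inter_comm _ _]
    exact hfc.preimage_isClosed_of_isClosed isClosed_Icc isClosed_Ici
  have hsS : sInf S ∈ S := hclosed.csInf_mem ⟨b, hbS⟩ hbdd
  refine ⟨sInf S, hsS.2, Subset.antisymm (fun t ht ↦ ⟨csInf_le hbdd ht, ht.2.2⟩) ?_⟩
  intro t ht
  have htab : t ∈ Icc a b := ⟨hsS.2.1.trans ht.1, ht.2⟩
  exact ⟨hsS.1.trans (hfm hsS.2 htab ht.1), htab⟩

noncomputable def volterraMeasure (γ' : ℝ → ℝ) (x : ℝ) : Measure ℝ :=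
  (volume.restrict (Icc 0 x)).withDensity fun t ↦ ENNReal.ofReal (γ' (x - t))

section DistortedVolume

variable {γ γ' : ℝ → ℝ} {x : ℝ}

theorem volterraMeasure_apply (S : Set ℝ) :
    volterraMeasure γ' x S = ∫⁻ t in S ∩ Icc 0 x, ENNReal.ofReal (γ' (x - t)) := by
  rw [volterraMeasure, withDensity_apply' _ S, Measure.restrict_restrict' measurableSet_Icc]

theorem volterraMeasure_real_Icc (hγ : ∀ t, HasDerivAt γ (γ' t) t) (hγ'c : Continuous γ')
    (hγ'nn : ∀ t, 0 ≤ γ' t) (hγ0 : γ 0 = 0) {s : ℝ} (hs : s ∈ Icc 0 x) :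
    (volterraMeasure γ' x).real (Icc s x) = γ (x - s) := by
  have hsub : Icc s x ∩ Icc 0 x = Icc s x := inter_eq_left.mpr (Icc_subset_Icc_left hs.1)
  have hint : IntegrableOn (fun t ↦ γ' (x - t)) (Icc s x) :=
    (hγ'c.comp (continuous_sub_left x)).integrableOn_Icc
  rw [measureReal_def, volterraMeasure_apply, hsub,
    ← ofReal_integral_eq_lintegral_ofReal hint (ae_of_all _ fun t ↦ hγ'nn _),
    ENNReal.toReal_ofReal (setIntegral_nonneg measurableSet_Icc fun t _ ↦ hγ'nn _),
    integral_Icc_eq_integral_Ioc, ← intervalIntegral.integral_of_le hs.2,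
    intervalIntegral.integral_comp_sub_left (fun t ↦ γ' t), sub_self,
    intervalIntegral.integral_eq_sub_of_hasDerivAt (fun t _ ↦ hγ t)
      (hγ'c.intervalIntegrable _ _), hγ0, sub_zero]

theorem volterraMeasure_real_setOf_le (hγ : ∀ t, HasDerivAt γ (γ' t) t) (hγ'c : Continuous γ')
    (hγ'nn : ∀ t, 0 ≤ γ' t) (hγ0 : γ 0 = 0) {f : ℝ → ℝ} (hx : 0 ≤ x)
    (hfc : ContinuousOn f (Icc 0 x)) (hfm : MonotoneOn f (Icc 0 x)) (β : ℝ) :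
    (volterraMeasure γ' x).real {t | β ≤ f t} = γ (volume ({t | β ≤ f t} ∩ Icc 0 x)).toReal := by
  have hrestrict : (volterraMeasure γ' x).real {t | β ≤ f t}
      = (volterraMeasure γ' x).real ({t | β ≤ f t} ∩ Icc 0 x) := by
    simp only [measureReal_def, volterraMeasure_apply, inter_assoc, inter_self]
  rw [hrestrict]
  rcases le_or_gt β (f x) with hβ | hβ
  · obtain ⟨s, hs, hlevel⟩ := hfm.setOf_le_inter_Icc_eq_Icc hx hfc hβ
    rw [hlevel, volterraMeasure_real_Icc hγ hγ'c hγ'nn hγ0 hs, Real.volume_Icc,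
      ENNReal.toReal_ofReal (sub_nonneg.mpr hs.2)]
  · have hempty : {t | β ≤ f t} ∩ Icc 0 x = ∅ :=
      eq_empty_of_forall_notMem fun t ⟨hβt, ht⟩ ↦
        hβ.not_ge (hβt.trans (hfm ht (right_mem_Icc.mpr hx) ht.2))
    simp [hempty, hγ0]

theorem integral_volterraMeasure (hγ'c : Continuous γ') (hγ'nn : ∀ t, 0 ≤ γ' t) (hx : 0 ≤ x)
    (f : ℝ → ℝ) : ∫ t, f t ∂volterraMeasure γ' x = ∫ t in 0..x, γ' (x - t) * f t := by
  rw [volterraMeasure, integral_withDensity_eq_integral_toReal_smul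
      (by fun_prop) (ae_of_all _ fun _ ↦ ENNReal.ofReal_lt_top),
    intervalIntegral.integral_of_le hx, ← integral_Icc_eq_integral_Ioc]
  simp only [ENNReal.toReal_ofReal (hγ'nn _), smul_eq_mul]

theorem integrable_volterraMeasure (hγ'c : Continuous γ') (hγ'nn : ∀ t, 0 ≤ γ' t) {f : ℝ → ℝ}
    (hfc : ContinuousOn f (Icc 0 x)) : Integrable f (volterraMeasure γ' x) := by
  rw [volterraMeasure, integrable_withDensity_iff (by fun_prop)
    (ae_of_all _ fun _ ↦ ENNReal.ofReal_lt_top)]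
  simp only [ENNReal.toReal_ofReal (hγ'nn _)]
  exact (hfc.mul (hγ'c.comp (continuous_sub_left x)).continuousOn).integrableOn_compact
    isCompact_Icc

theorem choquet_distortedVolume_Icc (hγ : ∀ t, HasDerivAt γ (γ' t) t) (hγ'c : Continuous γ')
    (hγ'nn : ∀ t, 0 ≤ γ' t) (hγ0 : γ 0 = 0) {f : ℝ → ℝ} (hx : 0 ≤ x)
    (hfc : ContinuousOn f (Icc 0 x)) (hfm : MonotoneOn f (Icc 0 x))
    (hfnn : ∀ t ∈ Icc 0 x, 0 ≤ f t) :
    choquet (fun A ↦ γ (volume A).toReal) (Icc 0 x) f = ∫ t in 0..x, γ' (x - t) * f t := by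
  have hfnn_ae : 0 ≤ᵐ[volterraMeasure γ' x] f :=
    withDensity_absolutelyContinuous _ _ (ae_restrict_of_forall_mem measurableSet_Icc hfnn)
  rw [choquet_of_nonneg _ hfnn, ← integral_volterraMeasure hγ'c hγ'nn hx,
    (integrable_volterraMeasure hγ'c hγ'nn hfc).integral_eq_integral_meas_le hfnn_ae]
  simp only [volterraMeasure_real_setOf_le hγ hγ'c hγ'nn hγ0 hx hfc hfm]

end DistortedVolume

/-- The probability that a Poisson random variable with mean `t` is at least `n`. -/
noncomputable def poissonTail (n : ℕ) (t : ℝ) : ℝ :=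
  1 - Real.exp (-t) * ∑ k ∈ Finset.range n, t ^ k / (Nat.factorial k : ℝ)

@[simp]
theorem poissonTail_zero (t : ℝ) : poissonTail 0 t = 1 := by
  simp [poissonTail]

theorem poissonTail_succ (n : ℕ) (t : ℝ) :
    poissonTail (n + 1) t = poissonTail n t - Real.exp (-t) * (t ^ n / (Nat.factorial n : ℝ)) := by
  rw [poissonTail, poissonTail, Finset.sum_range_succ]
  ring

theorem continuous_poissonTail (n : ℕ) : Continuous (poissonTail n) := by
  unfold poissonTail
  fun_prop

theorem hasDerivAt_poissonTail_succ (n : ℕ) (t : ℝ) :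
    HasDerivAt (poissonTail (n + 1)) (Real.exp (-t) * (t ^ n / (Nat.factorial n : ℝ))) t := by
  have hexp : HasDerivAt (fun t ↦ Real.exp (-t)) (-Real.exp (-t)) t := by
    simpa using (hasDerivAt_neg t).exp
  induction n with
  | zero =>
    have h1 : poissonTail 1 = fun t ↦ 1 - Real.exp (-t) := funext fun t ↦ by simp [poissonTail]
    rw [h1]
    simpa using hexp.const_sub 1
  | succ n ih =>
    rw [funext (poissonTail_succ (n + 1))]
    refine (ih.sub (hexp.mul ((hasDerivAt_pow (n + 1) t).div_const _))).congr_deriv ?_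
    rw [Nat.factorial_succ, Nat.cast_mul, Nat.add_sub_cancel]
    field_simp
    ring

theorem poissonTail_nonneg (n : ℕ) {t : ℝ} (ht : 0 ≤ t) : 0 ≤ poissonTail n t := by
  rw [poissonTail, sub_nonneg, ← le_div_iff₀' (Real.exp_pos _), Real.exp_neg, div_inv_eq_mul,
    one_mul]
  exact Real.sum_le_exp_of_nonneg ht n

theorem monotoneOn_poissonTail (n : ℕ) : MonotoneOn (poissonTail n) (Ici 0) := by
  cases n with
  | zero => exact fun _ _ _ _ _ ↦ by simp
  | succ n =>
    refine monotoneOn_of_hasDerivWithinAt_nonneg (convex_Ici 0)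
      (continuous_poissonTail _).continuousOn
      (fun t _ ↦ (hasDerivAt_poissonTail_succ n t).hasDerivWithinAt) fun t ht ↦ ?_
    rw [interior_Ici] at ht
    have := pow_nonneg (le_of_lt (mem_Ioi.mp ht)) n
    positivity

theorem integral_exp_mul_poissonTail (n : ℕ) (x : ℝ) :
    ∫ t in 0..x, Real.exp (-(x - t)) * poissonTail n t = poissonTail (n + 1) x := by
  have hsplit : ∀ t, Real.exp (-(x - t)) * poissonTail n t
      = Real.exp (t - x) - Real.exp (-x) * ∑ k ∈ Finset.range n, t ^ k / (Nat.factorial k : ℝ) := by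
    intro t
    rw [poissonTail, mul_sub, mul_one, ← mul_assoc, ← Real.exp_add, neg_sub]
    ring_nf
  have hexp : ∫ t in 0..x, Real.exp (t - x) = 1 - Real.exp (-x) := by
    rw [intervalIntegral.integral_comp_sub_right Real.exp, integral_exp, sub_self, Real.exp_zero,
      zero_sub]
  have hpow : ∀ k : ℕ, ∫ t in 0..x, t ^ k / (Nat.factorial k : ℝ)
      = x ^ (k + 1) / (Nat.factorial (k + 1) : ℝ) := fun k ↦ by
    rw [intervalIntegral.integral_div, integral_pow, Nat.factorial_succ, Nat.cast_mul,
      zero_pow k.succ_ne_zero, sub_zero]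
    push_cast
    field_simp
  simp_rw [hsplit]
  rw [intervalIntegral.integral_sub ((by fun_prop : Continuous _).intervalIntegrable _ _)
      ((by fun_prop : Continuous _).intervalIntegrable _ _), hexp,
    intervalIntegral.integral_const_mul,
    intervalIntegral.integral_finsetSum fun k _ ↦
      (by fun_prop : Continuous _).intervalIntegrable _ _,
    poissonTail, Finset.sum_range_succ']
  simp [hpow]
  ring

theorem volterraChoquet_eq_poissonTail_succ {f : ℝ → ℝ} (n : ℕ) {x : ℝ} (hx : 0 ≤ x)
    (hf : EqOn f (poissonTail n) (Icc 0 x)) : volterraChoquet f x = poissonTail (n + 1) x := by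
  have hγ : ∀ t, HasDerivAt (fun t ↦ 1 - Real.exp (-t)) (Real.exp (-t)) t := fun t ↦ by
    simpa using (hasDerivAt_neg t).exp.const_sub 1
  rw [volterraChoquet, choquet_congr _ hf, ← integral_exp_mul_poissonTail]
  exact choquet_distortedVolume_Icc hγ (by fun_prop) (fun t ↦ (Real.exp_pos _).le) (by simp) hx
    (continuous_poissonTail n).continuousOn ((monotoneOn_poissonTail n).mono Icc_subset_Ici_self)
    fun t ht ↦ poissonTail_nonneg n ht.1

theorem volterraChoquet_iterate_eq_poissonTail (n : ℕ) {x : ℝ} (hx : 0 ≤ x) :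
    volterraChoquet^[n] (fun _ ↦ 1) x = poissonTail n x := by
  induction n generalizing x with
  | zero => simp
  | succ n ih =>
    rw [Function.iterate_succ_apply']
    exact volterraChoquet_eq_poissonTail_succ n hx fun t ht ↦ ih ht.1

theorem volterraChoquet_iterates_general (n : ℕ) (x : ℝ) (hx : x ∈ Icc (0:ℝ) 1) :
    (volterraChoquet^[n] (fun _ => 1)) x
      = 1 - Real.exp (-x) * ∑ k ∈ Finset.range n, x ^ k / (Nat.factorial k : ℝ) :=
  volterraChoquet_iterate_eq_poissonTail n hx.1

/-- For `μ(A) = 1 − e^{−m(A)}` and `f₀ ≡ 1`, the iterates of the Volterra–Choquet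
operator satisfy `V^n(f₀)(x) = 1 − e^{−x} ∑_{k=0}^{n−1} x^k/k!` for all `n ≥ 1`. -/
theorem volterraChoquet_iterates (n : ℕ) (hn : 1 ≤ n) (x : ℝ) (hx : x ∈ Icc (0:ℝ) 1) :
    (volterraChoquet^[n] (fun _ => 1)) x
      = 1 - Real.exp (-x) * ∑ k ∈ Finset.range n, x ^ k / (Nat.factorial k : ℝ) :=
  volterraChoquet_iterates_general n x hx
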